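/- arXiv:2412.16560 — 2 statements merged into one kernel-verified Lean document; each statement's English description precedes it below -/
import Mathlib

section
/- For every word u over a nonempty finite alphabet A, h(u) ≥ 1 + ρ(u). -/
/-- Simon's congruence of order `k`: `u` and `v` have the same subwords
(subsequences) of length at most `k`. -/
def SimonCong {A : Type*} (k : ℕ) (u v : List A) : Prop :=
  ∀ s : List A, s.length ≤ k → (s.Sublist u ↔ s.Sublist v)

/-- The subword distance `δ(u,v) = sup {k | u ∼ₖ v} ∈ ℕ ∪ {∞}`. -/
noncomputable def delta {A : Type*} (u v : List A) : ℕ∞ :=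
  ⨆ k ∈ {k : ℕ | SimonCong k u v}, (k : ℕ∞)

/-- Right side distance `r(u,t) = δ(u, u·t)`. -/
noncomputable def sideR {A : Type*} (u t : List A) : ℕ∞ :=
  delta u (u ++ t)

/-- Left side distance `ℓ(t,u) = δ(t·u, u)`. -/
noncomputable def sideL {A : Type*} (t u : List A) : ℕ∞ :=
  delta (t ++ u) u

/-- The piecewise complexity `h(u)`: the least `n` such that every word
`v` with `u ∼ₙ v` equals `u`. -/
noncomputable def pieceH {A : Type*} (u : List A) : ℕ :=
  sInf {n : ℕ | ∀ v : List A, SimonCong n u v → v = u}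

/-- A word `u` is `m`-reduced if no strict subword of `u` is `∼ₘ`-equivalent to `u`. -/
def MReduced {A : Type*} (m : ℕ) (u : List A) : Prop :=
  ∀ u' : List A, u'.Sublist u → u' ≠ u → ¬ SimonCong m u' u

/-- The piecewise minimality index `ρ(u)`: the least `m` such that `u` is `m`-reduced. -/
noncomputable def rho {A : Type*} (u : List A) : ℕ :=
  sInf {m : ℕ | MReduced m u}

/-!
If `u` is not `m`-reduced, some strict subword is `∼ₘ`-equivalent to `u`, and sandwiching shows
that deleting a single letter `a` from `u = x a y` already gives `x y ∼ₘ x a y`. By Simon's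
classical argument this upgrades to `x a y ∼ₘ₊₁ x a a y`, so `u` is not determined by its
subwords of length `≤ m + 1`. Hence `u` is `(h(u) - 1)`-reduced, and `h(u) ≥ 1` because over a
nonempty alphabet `u ∼₀ u a`.
-/

namespace List

theorem Sublist.exists_eq_append_cons_of_ne {α : Type*} {l l' : List α} (h : l.Sublist l')
    (hne : l ≠ l') : ∃ x a y, l' = x ++ a :: y ∧ l.Sublist (x ++ y) := by
  induction h with
  | slnil => exact absurd rfl hne
  | cons a h _ => exact ⟨[], a, _, rfl, h⟩
  | @cons_cons l₁ l₂ a _ ih =>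
    obtain ⟨x, b, y, rfl, hs⟩ := ih fun h => hne (h ▸ rfl)
    exact ⟨a :: x, b, y, rfl, hs.cons_cons a⟩

theorem Sublist.concat_sublist_or_cons_sublist {α : Type*} {p q x y : List α} {a : α}
    (h : (p ++ a :: q).Sublist (x ++ y)) : (p ++ [a]).Sublist x ∨ (a :: q).Sublist y := by
  obtain ⟨r₁, r₂, heq, hr₁, hr₂⟩ := sublist_append_iff.mp h
  rcases append_eq_append_iff.mp heq with ⟨_ | ⟨b, c⟩, rfl, hq⟩ | ⟨c, -, rfl⟩
  · rw [nil_append] at hq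
    exact Or.inr (hq ▸ hr₂)
  · obtain ⟨rfl, rfl⟩ := cons.inj hq
    exact Or.inl ((sublist_append_left _ _).cons_cons a |>.append_left p |>.trans
      (by simpa using hr₁))
  · exact Or.inr ((sublist_append_right c _).trans hr₂)

end List

section SimonCong

variable {A : Type*}

theorem simonCong_zero (u v : List A) : SimonCong 0 u v := by
  intro s hs
  simp [List.length_eq_zero_iff.mp (Nat.le_zero.mp hs)]

theorem SimonCong.of_sublist_of_sublist {m : ℕ} {u' w u : List A} (h : SimonCong m u' u)
    (hu'w : u'.Sublist w) (hwu : w.Sublist u) : SimonCong m w u :=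
  fun s hs => ⟨fun hsw => hsw.trans hwu, fun hsu => ((h s hs).mpr hsu).trans hu'w⟩

theorem SimonCong.eq_of_length_lt {n : ℕ} {u v : List A} (h : SimonCong n u v)
    (hn : u.length < n) : v = u := by
  have huv : u.Sublist v := (h u hn.le).mp (List.Sublist.refl u)
  have htake : (v.take (u.length + 1)).Sublist u :=
    (h _ (by simp only [List.length_take]; omega)).mpr (List.take_sublist _ _)
  have hlen := htake.length_le
  rw [List.length_take] at hlen
  exact (huv.eq_of_length_le (by omega)).symm

/-- Simon's duplication step: a letter that can be deleted up to `∼ₘ` can be doubled up to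
`∼ₘ₊₁`. -/
theorem SimonCong.succ_append_cons_cons {m : ℕ} {x y : List A} {a : A}
    (h : SimonCong m (x ++ y) (x ++ a :: y)) :
    SimonCong (m + 1) (x ++ a :: y) (x ++ a :: a :: y) := by
  intro s hs
  refine ⟨fun hsub => hsub.trans ((List.sublist_cons_self a _).append_left x), fun hsub => ?_⟩
  obtain ⟨p, r, rfl, hp, hr⟩ := List.sublist_append_iff.mp hsub
  rcases List.sublist_cons_iff.mp hr with hr | ⟨r', rfl, hr'⟩
  · exact hp.append hr
  rcases List.sublist_cons_iff.mp hr' with hr' | ⟨q, rfl, hq⟩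
  · exact hp.append (hr'.cons_cons a)
  -- `s = p a a q`; its shortening `p a q` has length `≤ m`, so it already embeds in `x y`.
  have hpaq : (p ++ a :: q).Sublist (x ++ y) :=
    (h _ (by simp only [List.length_append, List.length_cons] at hs ⊢; omega)).mpr
      (hp.append (hq.cons_cons a))
  rcases hpaq.concat_sublist_or_cons_sublist with hpa | haq
  · simpa using hpa.append (hq.cons_cons a)
  · exact hp.append (haq.cons_cons a)

theorem mReduced_of_forall_simonCong_succ_eq {m : ℕ} {u : List A}
    (h : ∀ v, SimonCong (m + 1) u v → v = u) : MReduced m u := by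
  intro u' hsub hne hcong
  obtain ⟨x, a, y, rfl, hxy⟩ := hsub.exists_eq_append_cons_of_ne hne
  have hdel : SimonCong m (x ++ y) (x ++ a :: y) :=
    hcong.of_sublist_of_sublist hxy ((List.sublist_cons_self a y).append_left x)
  have hlen := congrArg List.length (h _ hdel.succ_append_cons_cons)
  simp at hlen

end SimonCong

section PieceH

variable {A : Type*}

theorem pieceH_spec (u : List A) : ∀ v, SimonCong (pieceH u) u v → v = u :=
  Nat.sInf_mem (s := {n | ∀ v, SimonCong n u v → v = u})
    ⟨u.length + 1, fun _ hv => hv.eq_of_length_lt (Nat.lt_succ_self _)⟩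

theorem pieceH_pos [Nonempty A] (u : List A) : 0 < pieceH u := by
  refine Nat.pos_of_ne_zero fun h0 => ?_
  have hlen := congrArg List.length
    (pieceH_spec u (u ++ [Classical.arbitrary A]) (h0 ▸ simonCong_zero _ _))
  simp at hlen

end PieceH

theorem stmt9_general {A : Type*} [Nonempty A] (u : List A) :
    pieceH u ≥ 1 + rho u := by
  obtain ⟨m, hm⟩ := Nat.exists_eq_add_one_of_ne_zero (pieceH_pos u).ne'
  have hred : MReduced m u := mReduced_of_forall_simonCong_succ_eq (hm ▸ pieceH_spec u)
  have hrho : rho u ≤ m := Nat.sInf_le hred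
  omega

theorem stmt9 {A : Type*} [Fintype A] [Nonempty A] (u : List A) :
    pieceH u ≥ 1 + rho u :=
  stmt9_general u
end

section
/- For all words u, v, t over a nonempty finite alphabet A: r(u·v, t) ≤ ρ(u) + r(v,t) and ℓ(t, u·v) ≤ ρ(v) + ℓ(t,u). -/
/-!
If `u` is `m`-reduced then, for every letter `c` of `u`, deleting the last occurrence of `c`
from `u` produces a subword `p ⊑ u` with `|p| ≤ m` and `p·c ⋢ u` (for other letters, `p = ε`).
Prefixing such a `p` to a subword `c·s` of `v·t` that is not a subword of `v` gives a subword of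
`u·v·t` that is not a subword of `u·v`. Hence `u·v ∼_{m+j} u·v·t` forces `v ∼_j v·t`, which with
`m = ρ(u)` is the bound on `r`; the bound on `ℓ` is its mirror image under word reversal.
-/

open scoped List

section

variable {A : Type*}

theorem simonCong_comm {k : ℕ} {u v : List A} : SimonCong k u v ↔ SimonCong k v u :=
  ⟨fun h s hs => (h s hs).symm, fun h s hs => (h s hs).symm⟩

theorem SimonCong.reverse {k : ℕ} {u v : List A} (h : SimonCong k u v) :
    SimonCong k u.reverse v.reverse := fun s hs => by
  simpa [List.sublist_reverse_iff] using h s.reverse (by simpa using hs)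

theorem simonCong_reverse_iff {k : ℕ} {u v : List A} :
    SimonCong k u.reverse v.reverse ↔ SimonCong k u v :=
  ⟨fun h => by simpa using h.reverse, SimonCong.reverse⟩

theorem SimonCong.le_delta {k : ℕ} {u v : List A} (h : SimonCong k u v) :
    (k : ℕ∞) ≤ delta u v :=
  le_biSup (fun k : ℕ => (k : ℕ∞)) (s := {k | SimonCong k u v}) h

theorem delta_comm (u v : List A) : delta u v = delta v u := by
  simp only [delta, Set.mem_ofPred_eq, simonCong_comm (u := u)]

theorem delta_reverse (u v : List A) : delta u.reverse v.reverse = delta u v := by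
  simp only [delta, Set.mem_ofPred_eq, simonCong_reverse_iff]

theorem sideL_eq_sideR_reverse (t u : List A) : sideL t u = sideR u.reverse t.reverse := by
  rw [sideL, sideR, ← delta_reverse, List.reverse_append, delta_comm]

theorem MReduced.reverse {m : ℕ} {u : List A} (h : MReduced m u) : MReduced m u.reverse :=
  fun u' hsub hne hcong => h u'.reverse (List.sublist_reverse_iff.mp hsub)
    (fun e => hne (by rw [← e, List.reverse_reverse]))
    (by simpa using hcong.reverse)

theorem mReduced_reverse_iff {m : ℕ} {u : List A} : MReduced m u.reverse ↔ MReduced m u :=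
  ⟨fun h => by simpa using h.reverse, MReduced.reverse⟩

theorem rho_reverse (u : List A) : rho u.reverse = rho u := by
  simp only [rho, mReduced_reverse_iff]

theorem mReduced_length (u : List A) : MReduced u.length u :=
  fun _ hsub hne hcong => hne (hsub.antisymm ((hcong u le_rfl).mpr (.refl u)))

theorem mReduced_rho (u : List A) : MReduced (rho u) u :=
  Nat.sInf_mem (s := {m | MReduced m u}) ⟨_, mReduced_length u⟩

theorem exists_eq_append_cons_not_mem {c : A} :
    ∀ {u : List A}, c ∈ u → ∃ w z, u = w ++ c :: z ∧ c ∉ z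
  | a :: l, h => by
    by_cases hl : c ∈ l
    · obtain ⟨w, z, rfl, hz⟩ := exists_eq_append_cons_not_mem hl
      exact ⟨a :: w, z, rfl, hz⟩
    · obtain rfl : c = a := by simpa [hl] using h
      exact ⟨[], l, rfl, hl⟩

theorem cons_sublist_of_cons_sublist_append {c : A} {q l : List A} :
    ∀ {z : List A}, c ∉ z → c :: q <+ z ++ l → c :: q <+ l
  | [], _, h => h
  | b :: z, hz, h => by
    rcases List.sublist_cons_iff.mp h with h | ⟨r, ⟨rfl, rfl⟩, -⟩
    · exact cons_sublist_of_cons_sublist_append (fun hc => hz (.tail _ hc)) h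
    · exact absurd (.head _) hz

theorem sublist_of_append_singleton_sublist {c : A} {p w z : List A} (hz : c ∉ z)
    (h : p ++ [c] <+ w ++ c :: z) : p <+ w := by
  have h' : c :: p.reverse <+ z.reverse ++ (c :: w.reverse) := by
    simpa using h.reverse
  simpa using cons_sublist_of_cons_sublist_append (by simpa using hz) h'

theorem MReduced.exists_sublist_not_append_singleton_sublist {m : ℕ} {u : List A}
    (hu : MReduced m u) (c : A) : ∃ p, p.length ≤ m ∧ p <+ u ∧ ¬ p ++ [c] <+ u := by
  by_cases hc : c ∈ u
  · obtain ⟨w, z, rfl, hz⟩ := exists_eq_append_cons_not_mem hc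
    have hsub : w ++ z <+ w ++ c :: z := (List.sublist_cons_self c z).append_left w
    have hne : w ++ z ≠ w ++ c :: z := fun e => by simpa using congrArg List.length e
    obtain ⟨p, hp, hiff⟩ :
        ∃ p : List A, p.length ≤ m ∧ ¬ (p <+ w ++ z ↔ p <+ w ++ c :: z) := by
      simpa [SimonCong] using hu _ hsub hne
    have hpu : p <+ w ++ c :: z := by
      by_contra h
      exact hiff (iff_of_false (fun h' => h (h'.trans hsub)) h)
    exact ⟨p, hp, hpu, fun hpc => hiff (iff_of_true
      ((sublist_of_append_singleton_sublist hz hpc).trans (List.sublist_append_left w z)) hpu)⟩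
  · exact ⟨[], by simp, List.nil_sublist u, fun h => hc (h.subset (by simp))⟩

theorem cons_sublist_of_append_cons_sublist_append {c : A} {s v : List A} :
    ∀ {u p : List A}, p ++ c :: s <+ u ++ v → ¬ p ++ [c] <+ u → c :: s <+ v
  | [], p, h, _ => (List.sublist_append_right p _).trans h
  | a :: u, [], h, hpc => by
    rcases List.sublist_cons_iff.mp h with h | ⟨r, ⟨rfl, rfl⟩, -⟩
    · exact cons_sublist_of_append_cons_sublist_append (p := []) h
        fun h' => hpc (h'.trans (List.sublist_cons_self a u))
    · exact absurd (List.cons_sublist_cons.mpr (List.nil_sublist u)) hpc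
  | a :: u, b :: p, h, hpc => by
    rcases List.sublist_cons_iff.mp h with h | ⟨r, ⟨rfl, rfl⟩, h⟩
    · exact cons_sublist_of_append_cons_sublist_append h
        fun h' => hpc (h'.trans (List.sublist_cons_self a u))
    · exact cons_sublist_of_append_cons_sublist_append h
        fun h' => hpc (List.cons_sublist_cons.mpr h')

theorem MReduced.simonCong_of_simonCong_append {m j : ℕ} {u v t : List A}
    (hu : MReduced m u) (h : SimonCong (m + j) (u ++ v) (u ++ v ++ t)) :
    SimonCong j v (v ++ t) := by
  refine fun s hs => ⟨fun hsv => hsv.trans (List.sublist_append_left v t), fun hsvt => ?_⟩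
  cases s with
  | nil => exact List.nil_sublist v
  | cons c s =>
    obtain ⟨p, hp, hpu, hpc⟩ := hu.exists_sublist_not_append_singleton_sublist c
    have hlen : (p ++ c :: s).length ≤ m + j := by
      simp only [List.length_append] at hs ⊢
      omega
    have hps : p ++ c :: s <+ u ++ v :=
      (h _ hlen).mpr (by simpa using hpu.append hsvt)
    exact cons_sublist_of_append_cons_sublist_append hps hpc

theorem sideR_append_le (u v t : List A) : sideR (u ++ v) t ≤ rho u + sideR v t := by
  refine iSup₂_le fun k hk => ?_
  rcases le_total k (rho u) with hk' | hk'
  · exact le_add_right (Nat.cast_le.mpr hk')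
  · obtain ⟨j, rfl⟩ := Nat.exists_eq_add_of_le hk'
    have hj : SimonCong j v (v ++ t) := (mReduced_rho u).simonCong_of_simonCong_append hk
    rw [Nat.cast_add]
    exact add_le_add_right hj.le_delta _

end

theorem stmt14_general {A : Type*} (u v t : List A) :
    sideR (u ++ v) t ≤ (rho u : ℕ∞) + sideR v t ∧
    sideL t (u ++ v) ≤ (rho v : ℕ∞) + sideL t u := by
  refine ⟨sideR_append_le u v t, ?_⟩
  simpa only [sideL_eq_sideR_reverse, List.reverse_append, rho_reverse] using
    sideR_append_le v.reverse u.reverse t.reverse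

theorem stmt14 {A : Type*} [Fintype A] [Nonempty A] (u v t : List A) :
    sideR (u ++ v) t ≤ (rho u : ℕ∞) + sideR v t ∧
    sideL t (u ++ v) ≤ (rho v : ℕ∞) + sideL t u :=
  stmt14_general u v t
end
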